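/- arXiv:1807.00061 — 5 statements merged into one kernel-verified Lean document; each statement's English description precedes it below -/
import Mathlib

section
/- Let W ⊆ R^n be a linear subspace admitting a basis ω^1, …, ω^d of nonnegative vectors. Suppose this basis is minimal, meaning there is no other nonnegative basis \hatω^1, …, \hatω^d of W such that each supp(\hatω^i) is contained in some supp(ω^{k_i}) with at least one strict inclusion. Then for any two distinct indices a ≠ b, the only vector z ∈ W with supp(z) ⊆ supp(ω^a) ∩ supp(ω^b) is z = 0. -/
/-!
Suppose `0 ≠ z ∈ W` has support in `supp ω a ∩ supp ω b`; up to sign, `z` has a positive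
entry. Subtracting from `ω m` (`m = a, b`) the largest multiple `t • z` that keeps it
nonnegative kills a coordinate of `supp ω m`. If `ω m - t • z ≠ 0`, the exchange lemma lets it
replace some basis vector, giving a nonnegative basis with strictly smaller supports.
Minimality thus forces `ω a` and `ω b` to both be multiples of `z`, contradicting linear
independence.
-/

open Function

section Exchange

variable {K V ι : Type*} [Field K] [AddCommGroup V] [Module K V] [Fintype ι] [DecidableEq ι]

theorem exists_update_linearIndependent_span_eq {ω : ι → V} (hω : LinearIndependent K ω)
    {v : V} (hv : v ∈ Submodule.span K (Set.range ω)) (hv0 : v ≠ 0) :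
    ∃ j, LinearIndependent K (update ω j v) ∧
      Submodule.span K (Set.range (update ω j v)) = Submodule.span K (Set.range ω) := by
  rw [← Finsupp.range_linearCombination] at hv
  obtain ⟨l, rfl⟩ := hv
  obtain ⟨j, hj⟩ : ∃ j, l j ≠ 0 := by
    by_contra! h
    exact hv0 (by rw [show l = 0 from Finsupp.ext h, map_zero])
  have hind : LinearIndependent K (update ω j (Finsupp.linearCombination K ω l)) :=
    hω.update j _ ⟨1, one_mem _, l, mem_nonZeroDivisors_of_ne_zero hj, one_smul _ _⟩
  have := FiniteDimensional.span_of_finite K (Set.finite_range ω)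
  refine ⟨j, hind, Submodule.eq_of_le_of_finrank_eq ?_ ?_⟩
  · rw [Submodule.span_le, Set.range_subset_iff]
    intro i
    rcases eq_or_ne i j with rfl | hi
    · rw [update_self, ← Finsupp.range_linearCombination]
      exact LinearMap.mem_range_self _ _
    · rw [update_of_ne hi]
      exact Submodule.subset_span (Set.mem_range_self i)
  · rw [finrank_span_eq_card hind, finrank_span_eq_card hω]

end Exchange

section Nonneg

variable {K α : Type*} [Field K] [LinearOrder K] [IsStrictOrderedRing K]

theorem exists_pos_smul_sub_nonneg_support_ssubset [Finite α] {w z : α → K} (hw : 0 ≤ w)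
    (hz : ∃ i, 0 < z i) (hzw : support z ⊆ support w) :
    ∃ t : K, 0 < t ∧ 0 ≤ w - t • z ∧ support (w - t • z) ⊂ support w := by
  have := Fintype.ofFinite α
  obtain ⟨i₀, hi₀, hmin⟩ := Finset.exists_min_image {i | 0 < z i} (fun i => w i / z i)
    (by simpa [Finset.Nonempty] using hz)
  rw [Finset.mem_filter_univ] at hi₀
  have hwi₀ : 0 < w i₀ := (hw i₀).lt_of_ne' (hzw hi₀.ne')
  refine ⟨w i₀ / z i₀, div_pos hwi₀ hi₀, fun i => ?_, ?_, fun h => ?_⟩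
  · rcases lt_or_ge 0 (z i) with hzi | hzi
    · have := hmin i (by simpa using hzi)
      simpa [← le_div_iff₀ hzi] using this
    · simpa using (mul_nonpos_of_nonneg_of_nonpos (div_pos hwi₀ hi₀).le hzi).trans (hw i)
  · refine (support_sub _ _).trans (Set.union_subset subset_rfl ?_)
    exact (support_const_smul_subset _ _).trans hzw
  · have := h hwi₀.ne'
    simp [div_mul_cancel₀ _ hi₀.ne'] at this

end Nonneg

section Refinement

variable {K α ι : Type*} [Field K] [LinearOrder K] [Fintype ι]

def HasNonnegSupportRefinement (ω : ι → α → K) : Prop :=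
  ∃ η : ι → α → K, (∀ k i, 0 ≤ η k i) ∧ LinearIndependent K η ∧
    Submodule.span K (Set.range η) = Submodule.span K (Set.range ω) ∧
    ∃ k : ι → ι, (∀ i, support (η i) ⊆ support (ω (k i))) ∧
      ∃ i, support (η i) ⊂ support (ω (k i))

theorem hasNonnegSupportRefinement_of_support_ssubset {ω : ι → α → K}
    (hω : ∀ k i, 0 ≤ ω k i) (hind : LinearIndependent K ω) {v : α → K}
    (hv : v ∈ Submodule.span K (Set.range ω))
    (hv0 : v ≠ 0) (hvnn : 0 ≤ v) {m : ι} (hvm : support v ⊂ support (ω m)) :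
    HasNonnegSupportRefinement ω := by
  classical
  obtain ⟨j, hli, hspan⟩ := exists_update_linearIndependent_span_eq hind hv hv0
  refine ⟨update ω j v, fun k => ?_, hli, hspan, update id j m, fun i => ?_, j, by simpa⟩
  · rcases eq_or_ne k j with rfl | hk
    · simpa using fun i => hvnn i
    · simpa [hk] using hω k
  · rcases eq_or_ne i j with rfl | hi
    · simpa using hvm.subset
    · simp [hi]

theorem exists_eq_smul_of_not_hasNonnegSupportRefinement [IsStrictOrderedRing K] [Finite α]
    {ω : ι → α → K} (hmin : ¬ HasNonnegSupportRefinement ω) (hω : ∀ k i, 0 ≤ ω k i)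
    (hind : LinearIndependent K ω) {z : α → K} (hz : z ∈ Submodule.span K (Set.range ω))
    (hpos : ∃ i, 0 < z i) {m : ι} (hzm : support z ⊆ support (ω m)) :
    ∃ t : K, t ≠ 0 ∧ ω m = t • z := by
  obtain ⟨t, ht, hnn, hss⟩ := exists_pos_smul_sub_nonneg_support_ssubset (hω m) hpos hzm
  refine ⟨t, ht.ne', by_contra fun hne => hmin ?_⟩
  have hmem : ω m - t • z ∈ Submodule.span K (Set.range ω) :=
    sub_mem (Submodule.subset_span ⟨m, rfl⟩) (Submodule.smul_mem _ t hz)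
  exact hasNonnegSupportRefinement_of_support_ssubset hω hind hmem (sub_ne_zero.mpr hne) hnn hss

end Refinement

/-- A nonnegative basis of a subspace W ⊆ ℝ^n with minimal supports: for any
two distinct basis vectors, the only z ∈ W with support contained in the
intersection of their supports is 0. -/
theorem stmt_3 {n d : ℕ} (W : Submodule ℝ (Fin n → ℝ))
    (ω : Fin d → Fin n → ℝ)
    (hnn : ∀ k i, 0 ≤ ω k i)
    (hind : LinearIndependent ℝ ω)
    (hspan : Submodule.span ℝ (Set.range ω) = W)
    (hmin : ¬ ∃ η : Fin d → Fin n → ℝ,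
      (∀ k i, 0 ≤ η k i) ∧ LinearIndependent ℝ η ∧
      Submodule.span ℝ (Set.range η) = W ∧
      (∃ k : Fin d → Fin d,
        (∀ i, Function.support (η i) ⊆ Function.support (ω (k i))) ∧
        (∃ i, Function.support (η i) ⊂ Function.support (ω (k i))))) :
    ∀ a b : Fin d, a ≠ b →
      ∀ z ∈ W, Function.support z ⊆
        Function.support (ω a) ∩ Function.support (ω b) → z = 0 := by
  subst hspan
  replace hmin : ¬ HasNonnegSupportRefinement ω := hmin
  intro a b hab z hz hzab
  by_contra hz0
  wlog hpos : ∃ i, 0 < z i generalizing z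
  · obtain ⟨i, hi⟩ := ne_iff.mp hz0
    refine this (-z) (neg_mem hz) (by rwa [support_neg]) (neg_ne_zero.mpr hz0) ⟨i, ?_⟩
    simpa using (not_lt.mp fun h => hpos ⟨i, h⟩).lt_of_ne hi
  obtain ⟨s, -, hsa⟩ := exists_eq_smul_of_not_hasNonnegSupportRefinement hmin hnn hind hz hpos
    (hzab.trans Set.inter_subset_left)
  obtain ⟨t, ht, htb⟩ := exists_eq_smul_of_not_hasNonnegSupportRefinement hmin hnn hind hz hpos
    (hzab.trans Set.inter_subset_right)
  have hdep : t • ω a + (-s) • ω b = 0 := by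
    rw [hsa, htb]
    module
  exact ht ((LinearIndepOn.pair_iff ω hab).mp (hind.linearIndepOn _) t (-s) hdep).1
end

section
/- Let W ⊆ R^n be a linear subspace. Suppose {ω^1,…,ω^d} and {η^1,…,η^d} are two bases of W consisting of nonnegative vectors with pairwise disjoint supports. Then the collection of supports coincides: {supp(ω^1),…,supp(ω^d)} = {supp(η^1),…,supp(η^d)} as sets of subsets of {1,…,n}. -/
private lemma eval_eq {n d : ℕ} (ω : Fin d → Fin n → ℝ)
    (hdisj : ∀ a b : Fin d, a ≠ b →
      Function.support (ω a) ∩ Function.support (ω b) = ∅)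
    (c : Fin d → ℝ) (i : Fin d) (y : Fin n) (hy : ω i y ≠ 0) :
    (∑ j, c j • ω j) y = c i * ω i y := by
  rw [Finset.sum_apply]
  rw [Finset.sum_eq_single i]
  · rfl
  · intro j _ hji
    have := hdisj j i hji
    by_contra h
    have hωj : ω j y ≠ 0 := by
      simp only [Pi.smul_apply, smul_eq_mul] at h
      intro h0; exact h (by rw [h0]; ring)
    have : y ∈ Function.support (ω j) ∩ Function.support (ω i) := ⟨hωj, hy⟩
    rw [hdisj j i hji] at this
    exact this
  · intro h; exact absurd (Finset.mem_univ i) h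

private lemma key {n d : ℕ} (ω : Fin d → Fin n → ℝ)
    (hdisj : ∀ a b : Fin d, a ≠ b →
      Function.support (ω a) ∩ Function.support (ω b) = ∅)
    (v : Fin n → ℝ) (hv : v ∈ Submodule.span ℝ (Set.range ω))
    (i : Fin d) (x y : Fin n) (hx : ω i x ≠ 0) (hvx : v x ≠ 0)
    (hy : ω i y ≠ 0) : v y ≠ 0 := by
  obtain ⟨c, hc⟩ := (Submodule.mem_span_range_iff_exists_fun ℝ).mp hv
  have hxe : v x = c i * ω i x := by rw [← hc]; exact eval_eq ω hdisj c i x hx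
  have hye : v y = c i * ω i y := by rw [← hc]; exact eval_eq ω hdisj c i y hy
  rw [hye]
  rw [hxe] at hvx
  exact mul_ne_zero (fun h => hvx (by rw [h]; ring)) hy

private lemma exists_idx_ne {n d : ℕ} (ω : Fin d → Fin n → ℝ)
    (v : Fin n → ℝ) (hv : v ∈ Submodule.span ℝ (Set.range ω))
    (x : Fin n) (hvx : v x ≠ 0) : ∃ j, ω j x ≠ 0 := by
  obtain ⟨c, hc⟩ := (Submodule.mem_span_range_iff_exists_fun ℝ).mp hv
  by_contra h
  push_neg at h
  apply hvx
  rw [← hc, Finset.sum_apply]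
  exact Finset.sum_eq_zero fun j _ => by simp [h j]

private lemma incl {n d : ℕ} (ω η : Fin d → Fin n → ℝ)
    (hindω : LinearIndependent ℝ ω)
    (hspan : Submodule.span ℝ (Set.range ω) = Submodule.span ℝ (Set.range η))
    (hdisjω : ∀ a b : Fin d, a ≠ b →
      Function.support (ω a) ∩ Function.support (ω b) = ∅)
    (hdisjη : ∀ a b : Fin d, a ≠ b →
      Function.support (η a) ∩ Function.support (η b) = ∅) :
    {s : Set (Fin n) | ∃ i, s = Function.support (ω i)} ⊆
      {s : Set (Fin n) | ∃ i, s = Function.support (η i)} := by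
  rintro s ⟨i, rfl⟩
  have hωmem : ω i ∈ Submodule.span ℝ (Set.range η) := by
    rw [← hspan]; exact Submodule.subset_span ⟨i, rfl⟩
  have hne : ω i ≠ 0 := hindω.ne_zero i
  obtain ⟨x, hx⟩ : ∃ x, ω i x ≠ 0 := by
    by_contra h; push_neg at h; exact hne (funext h)
  obtain ⟨j, hj⟩ := exists_idx_ne η (ω i) hωmem x hx
  refine ⟨j, ?_⟩
  ext y
  have hηmem : η j ∈ Submodule.span ℝ (Set.range ω) := by
    rw [hspan]; exact Submodule.subset_span ⟨j, rfl⟩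
  constructor
  · intro hy
    exact key ω hdisjω (η j) hηmem i x y hx hj hy
  · intro hy
    exact key η hdisjη (ω i) hωmem j x y hj hx hy

/-- Two nonnegative bases of the same subspace with pairwise disjoint supports
have the same collection of supports. -/
theorem stmt_5 {n d : ℕ} (W : Submodule ℝ (Fin n → ℝ))
    (ω η : Fin d → Fin n → ℝ)
    (hnnω : ∀ k i, 0 ≤ ω k i) (hnnη : ∀ k i, 0 ≤ η k i)
    (hindω : LinearIndependent ℝ ω) (hindη : LinearIndependent ℝ η)
    (hspanω : Submodule.span ℝ (Set.range ω) = W)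
    (hspanη : Submodule.span ℝ (Set.range η) = W)
    (hdisjω : ∀ a b : Fin d, a ≠ b →
      Function.support (ω a) ∩ Function.support (ω b) = ∅)
    (hdisjη : ∀ a b : Fin d, a ≠ b →
      Function.support (η a) ∩ Function.support (η b) = ∅) :
    {s : Set (Fin n) | ∃ i, s = Function.support (ω i)} =
      {s : Set (Fin n) | ∃ i, s = Function.support (η i)} := by
  have hspan : Submodule.span ℝ (Set.range ω) = Submodule.span ℝ (Set.range η) :=
    hspanω.trans hspanη.symm
  exact Set.Subset.antisymm
    (incl ω η hindω hspan hdisjω hdisjη)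
    (incl η ω hindη hspan.symm hdisjη hdisjω)
end

section
/- Let I be a finite index set, ω ∈ R^I with ω_k > 0 for all k, ℓ ∈ I, and y ∈ Z_{>=0}^I with y_ℓ = 0 and y · ω = ω_ℓ. Let ℓ_1, …, ℓ_j ∈ I \ {ℓ} be distinct indices with y_{ℓ_q} ≥ 1 for all q, and suppose for each q = 1,…,j there exists z^q ∈ Z^I with z^q · ω = 0, z^q_ℓ ≥ 1, z^q_{ℓ_q} ≥ -1, and z^q_k ≥ 0 for all k ∉ {ℓ, ℓ_q}. Then j ≤ 1, and if j = 1 then y_{ℓ_1} = 1. -/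
/-- The incompatibility argument: given the orthogonality relations from the
paths ℓ_q ⇝ ℓ, at most one species ℓ_q in the product ultimately produces ℓ,
and if one exists its coefficient is 1. -/
theorem stmt_8 {I : Type*} [Fintype I] [DecidableEq I]
    (ω : I → ℝ) (hω : ∀ k, 0 < ω k)
    (ℓ : I) (y : I → ℕ)
    (hyℓ : y ℓ = 0)
    (hy : ∑ k, (y k : ℝ) * ω k = ω ℓ)
    (j : ℕ) (ℓs : Fin j → I)
    (hinj : Function.Injective ℓs)
    (hne : ∀ q, ℓs q ≠ ℓ)
    (hge : ∀ q, 1 ≤ y (ℓs q))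
    (z : Fin j → I → ℤ)
    (hz : ∀ q, ∑ k, (z q k : ℝ) * ω k = 0)
    (hzℓ : ∀ q, 1 ≤ z q ℓ)
    (hzq : ∀ q, -1 ≤ z q (ℓs q))
    (hznn : ∀ q k, k ≠ ℓ → k ≠ ℓs q → 0 ≤ z q k) :
    j ≤ 1 ∧ ∀ q : Fin j, y (ℓs q) = 1 := by
  classical
  set w : I → ℝ := fun k => (y k : ℝ) + ∑ q, (z q k : ℝ) with hw
  -- sum of z over q at index ℓs p is ≥ -1
  have hzsum : ∀ p : Fin j, (-1 : ℝ) ≤ ∑ q, (z q (ℓs p) : ℝ) := by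
    intro p
    rw [← Finset.add_sum_erase _ _ (Finset.mem_univ p)]
    have h1 : (-1 : ℝ) ≤ (z p (ℓs p) : ℝ) := by exact_mod_cast hzq p
    have h2 : 0 ≤ ∑ q ∈ Finset.univ.erase p, (z q (ℓs p) : ℝ) := by
      apply Finset.sum_nonneg
      intro q hq
      have hqp : q ≠ p := (Finset.mem_erase.mp hq).1
      have := hznn q (ℓs p) (hne p) (fun h => hqp (hinj h).symm)
      exact_mod_cast this
    linarith
  have hwnn : ∀ k, 0 ≤ w k := by
    intro k
    by_cases hk : ∃ p, ℓs p = k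
    · obtain ⟨p, rfl⟩ := hk
      have := hzsum p
      have hy1 : (1 : ℝ) ≤ (y (ℓs p) : ℝ) := by exact_mod_cast hge p
      simp only [hw]; linarith
    · push_neg at hk
      have hnn : 0 ≤ ∑ q, (z q k : ℝ) := by
        apply Finset.sum_nonneg
        intro q _
        by_cases hkl : k = ℓ
        · have h1 : (1 : ℝ) ≤ (z q k : ℝ) := by
            rw [hkl]; exact_mod_cast hzℓ q
          linarith
        · have := hznn q k hkl (fun h => hk q h.symm)
          exact_mod_cast this
      have hy0 : (0 : ℝ) ≤ (y k : ℝ) := Nat.cast_nonneg _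
      simp only [hw]; linarith
  have hwℓ : (j : ℝ) ≤ w ℓ := by
    have h1 : (j : ℝ) ≤ ∑ q : Fin j, (z q ℓ : ℝ) := by
      have : ∑ _q : Fin j, (1 : ℝ) ≤ ∑ q : Fin j, (z q ℓ : ℝ) := by
        apply Finset.sum_le_sum
        intro q _
        exact_mod_cast hzℓ q
      simpa using this
    simp only [hw, hyℓ, Nat.cast_zero, zero_add]
    exact h1
  have hsum : ∑ k, w k * ω k = ω ℓ := by
    simp only [hw, add_mul]
    rw [Finset.sum_add_distrib, hy]
    have : ∑ k, (∑ q, (z q k : ℝ)) * ω k = ∑ q, ∑ k, (z q k : ℝ) * ω k := by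
      rw [Finset.sum_comm]
      congr 1
      ext k
      rw [Finset.sum_mul]
    rw [this]
    simp [hz]
  -- partial sums are bounded by ω ℓ
  have hpart : ∀ s : Finset I, ∑ k ∈ s, w k * ω k ≤ ω ℓ := by
    intro s
    rw [← hsum]
    apply Finset.sum_le_sum_of_subset_of_nonneg (Finset.subset_univ s)
    intro k _ _
    exact mul_nonneg (hwnn k) (hω k).le
  have hwℓω : (j : ℝ) * ω ℓ ≤ ω ℓ := by
    have := hpart {ℓ}
    rw [Finset.sum_singleton] at this
    nlinarith [hω ℓ, hwℓ]
  have hj1 : j ≤ 1 := by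
    have : (j : ℝ) ≤ 1 := by nlinarith [hω ℓ]
    exact_mod_cast this
  refine ⟨hj1, fun q => ?_⟩
  have hj : 1 ≤ j := q.pos
  have hq1 : (1 : ℝ) ≤ w ℓ := le_trans (by exact_mod_cast hj) hwℓ
  have hpair := hpart {ℓ, ℓs q}
  rw [Finset.sum_pair (fun h => hne q h.symm)] at hpair
  have hwq0 : w (ℓs q) = 0 := by
    have h1 := hwnn (ℓs q)
    nlinarith [hω ℓ, hω (ℓs q)]
  have hyle : (y (ℓs q) : ℝ) ≤ 1 := by
    have := hzsum q
    simp only [hw] at hwq0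
    linarith
  have h2 : y (ℓs q) ≤ 1 := by exact_mod_cast hyle
  have h3 := hge q
  omega
end

section
/- Let G be a finite labeled multidigraph without self-loops on node set N, with edge label function π : E → R. Let L be its Laplacian, the |N|×|N| matrix with off-diagonal entry L_{ij} = Σ_{e : j → i} π(e) and diagonal entry L_{jj} = - Σ_{i ≠ j} L_{ij}. Then for any node N_0 ∈ N, the determinant of the matrix obtained from L by deleting the row and column of N_0 equals (-1)^{|N|-1} times the sum, over all spanning trees τ of G rooted at N_0 (directed so every node has a unique path to N_0), of the product of the labels of the edges of τ. -/
open scoped Classical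

/-!
Column `j` of the Laplacian is `∑ e, π e • (δ (t e) - δ j)` over the edges leaving `j`, so
expanding the minor multilinearly in its (transposed) rows gives a sum, over all choices `f` of
one outgoing edge at each non-root node, of `∏ j, π (f j)` times `det (1 - P_f)` up to the sign
`(-1) ^ (|N| - 1)`, where `P_f` is the 0/1 matrix of the parent map `j ↦ t (f j)`. If every
node reaches the root under the parent map, `1 - P_f` is unitriangular for the order by distance
to the root, so its determinant is `1`; otherwise the indicator of the nodes that never reach the
root is a nonzero kernel vector, so it is `0`. The choices of the first kind are exactly the
spanning trees rooted at `N₀`.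
-/

open Finset Fintype Matrix Function Relation

theorem Matrix.det_of_sum_smul_rows {ι κ R : Type*} [Fintype ι] [DecidableEq ι] [CommRing R]
    (A : ι → Finset κ) (c : ι → κ → R) (w : ι → κ → ι → R) :
    (of fun j => ∑ e ∈ A j, c j e • w j e).det =
      ∑ f ∈ piFinset A, (∏ j, c j (f j)) * (of fun j => w j (f j)).det :=
  (detRowAlternating.toMultilinearMap.map_sum_finset (fun j e => c j e • w j e) A).trans
    (sum_congr rfl fun _ _ => detRowAlternating.map_smul_univ _ _)

section SuccMatrix

variable {N : Type*} [DecidableEq N] (R : Type*) [CommRing R] (r : N)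

def succMatrix (F : N → N) : Matrix {v // v ≠ r} {v // v ≠ r} R :=
  of fun j i => if F j = i then 1 else 0

variable {R r} [Fintype N]

theorem succMatrix_mulVec (F : N → N) (y : N → R) (hy : y r = 0) :
    succMatrix R r F *ᵥ (fun i => y i) = fun j : {v // v ≠ r} => y (F j) := by
  ext j
  simp only [succMatrix, mulVec, dotProduct, of_apply, ite_mul, one_mul, zero_mul]
  rw [← sum_subtype (univ.erase r) (by simp) fun v => if F j = v then y v else 0,
    sum_erase _ (by simp [hy]), Fintype.sum_ite_eq]

theorem det_one_sub_succMatrix_of_reaches {F : N → N} (h : ∀ v, ∃ k, F^[k] v = r) :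
    (1 - succMatrix R r F).det = 1 := by
  have depth_lt : ∀ j i : {v // v ≠ r}, F j = i → Nat.find (h i) < Nat.find (h j) := by
    intro j i hji
    have hpos : Nat.find (h j) ≠ 0 := fun h0 => j.2 (by
      have := Nat.find_spec (h j); rwa [h0] at this)
    obtain ⟨k, hk⟩ := Nat.exists_eq_add_one_of_ne_zero hpos
    have : F^[k] i = r := by
      rw [← hji, ← iterate_succ_apply, Nat.succ_eq_add_one, ← hk]
      exact Nat.find_spec (h j)
    exact hk ▸ Nat.lt_succ_of_le (Nat.find_min' _ this)
  let depth : {v // v ≠ r} → ℕᵒᵈ := fun v => OrderDual.toDual (Nat.find (h v))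
  have htri : (1 - succMatrix R r F).BlockTriangular depth := by
    intro i j hij
    have hne : i ≠ j := by rintro rfl; exact lt_irrefl _ hij
    have : F i ≠ j := fun hF => (depth_lt i j hF).not_gt hij
    simp [succMatrix, hne, this]
  rw [htri.det]
  refine prod_eq_one fun a _ => ?_
  have : (1 - succMatrix R r F).toSquareBlock depth a = 1 := by
    ext ⟨i, hi⟩ ⟨j, hj⟩
    have : F i ≠ j := fun hF => (depth_lt i j hF).ne (congrArg OrderDual.ofDual (hj.trans hi.symm))
    simp [toSquareBlock, toSquareBlockProp, succMatrix, one_apply, this]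
  rw [this, det_one]

theorem det_one_sub_succMatrix_of_not_reaches {F : N → N} {v : N} (hv : ∀ k, F^[k] v ≠ r) :
    (1 - succMatrix R r F).det = 0 := by
  let y : N → R := fun w => if ∃ k, F^[k] w = r then 0 else 1
  have hy : y r = 0 := if_pos ⟨0, rfl⟩
  have hyF : ∀ j : {v // v ≠ r}, y (F j) = y j := by
    intro j
    suffices (∃ k, F^[k] (F j) = r) ↔ ∃ k, F^[k] j = r by simp only [y, this]
    refine ⟨fun ⟨k, hk⟩ => ⟨k + 1, hk⟩, fun ⟨k, hk⟩ => ?_⟩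
    obtain _ | k := k
    · exact absurd hk j.2
    · exact ⟨k, hk⟩
  have hker : (1 - succMatrix R r F) *ᵥ (fun i : {v // v ≠ r} => y i) = 0 := by
    ext j
    simp [sub_mulVec, succMatrix_mulVec F y hy, hyF]
  refine det_eq_zero_of_mulVec_eq_zero_of_mem_nonZeroDivisors hker (i := ⟨v, hv 0⟩) ?_
  simp [y, hv]

theorem det_one_sub_succMatrix (F : N → N) :
    (1 - succMatrix R r F).det = if ∀ v, ∃ k, F^[k] v = r then 1 else 0 := by
  split_ifs with h
  · exact det_one_sub_succMatrix_of_reaches h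
  · push Not at h
    obtain ⟨v, hv⟩ := h
    exact det_one_sub_succMatrix_of_not_reaches hv

end SuccMatrix

theorem laplacian_apply_eq_neg_sum {N E R : Type*} [Fintype N] [DecidableEq N] [Fintype E]
    [Ring R] {s t : E → N} (hloop : ∀ e, s e ≠ t e) {π : E → R} {L : Matrix N N R}
    (hoff : ∀ i j, i ≠ j → L i j = ∑ e ∈ univ.filter (fun e => s e = j ∧ t e = i), π e)
    (hdiag : ∀ j, L j j = -∑ i ∈ univ.erase j, L i j) (i j : N) :
    L i j = -∑ e ∈ univ.filter (fun e => s e = j),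
      π e * ((if j = i then 1 else 0) - if t e = i then 1 else 0) := by
  rcases eq_or_ne i j with rfl | hij
  · have hout : ∀ e ∈ univ.filter (fun e => s e = i), t e ∈ univ.erase i := fun e he =>
      mem_erase.2 ⟨fun h => hloop e ((mem_filter.1 he).2.trans h.symm), mem_univ _⟩
    rw [hdiag, ← sum_fiberwise_of_maps_to hout]
    refine congrArg Neg.neg (sum_congr rfl fun k hk => ?_)
    rw [hoff k i (ne_of_mem_erase hk), filter_filter]
    refine sum_congr rfl fun e he => ?_
    have : t e ≠ i := (mem_filter.1 he).2.2 ▸ ne_of_mem_erase hk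
    simp [this]
  · rw [hoff i j hij, ← sum_neg_distrib, sum_filter, sum_filter]
    refine sum_congr rfl fun e _ => ?_
    by_cases hs : s e = j <;> by_cases ht : t e = i <;> simp [hs, ht, hij.symm]

theorem Relation.reflTransGen_iff_exists_iterate {α : Type*} {rel : α → α → Prop} {F : α → α}
    {a b : α} (hrel : ∀ x y, rel x y → F x = y) (hF : ∀ x, x ≠ b → rel x (F x)) :
    ReflTransGen rel a b ↔ ∃ k, F^[k] a = b := by
  constructor
  · intro h
    induction h using ReflTransGen.head_induction_on with
    | refl => exact ⟨0, rfl⟩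
    | head hxy _ ih =>
      obtain ⟨k, hk⟩ := ih
      exact ⟨k + 1, by rw [iterate_succ_apply, hrel _ _ hxy, hk]⟩
  · rintro ⟨k, hk⟩
    induction k generalizing a with
    | zero => exact hk ▸ ReflTransGen.refl
    | succ k ih =>
      by_cases ha : a = b
      · exact ha ▸ ReflTransGen.refl
      · exact ReflTransGen.head (hF a ha) (ih hk)

section RootedSpanningTree

variable {N E : Type*} [DecidableEq N] (s t : E → N) (r : N)

def IsRootedSpanningTree (τ : Finset E) : Prop :=
  (∀ v : N, v ≠ r → (τ.filter (fun e => s e = v)).card = 1) ∧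
    (τ.filter (fun e => s e = r)).card = 0 ∧
    ∀ v : N, ReflTransGen (fun a b => ∃ e ∈ τ, s e = a ∧ t e = b) v r

def parentMap (f : {v // v ≠ r} → E) (v : N) : N :=
  if h : v = r then r else t (f ⟨v, h⟩)

def outEdgeChoices [Fintype N] [Fintype E] : Finset ({v // v ≠ r} → E) :=
  piFinset fun j => univ.filter (fun e => s e = j)

variable {s t r}

theorem mem_outEdgeChoices [Fintype N] [Fintype E] {f : {v // v ≠ r} → E} :
    f ∈ outEdgeChoices s r ↔ ∀ j, s (f j) = j := by
  simp [outEdgeChoices]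

theorem parentMap_coe (f : {v // v ≠ r} → E) (j : {v // v ≠ r}) : parentMap t r f j = t (f j) :=
  dif_neg j.2

variable [DecidableEq E] [Fintype N] {f : {v // v ≠ r} → E}

theorem filter_source_image_eq (hf : ∀ j, s (f j) = j) (v : N) :
    (univ.image f).filter (fun e => s e = v) = if h : v = r then ∅ else {f ⟨v, h⟩} := by
  ext e
  simp only [mem_filter, mem_image, mem_univ, true_and]
  split_ifs with h
  · simp only [notMem_empty, iff_false, not_and]
    rintro ⟨j, rfl⟩ hj
    exact j.2 (hf j ▸ hj ▸ h)
  · simp only [mem_singleton]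
    constructor
    · rintro ⟨⟨j, rfl⟩, hj⟩
      exact congrArg f (Subtype.ext ((hf j).symm.trans hj))
    · rintro rfl
      exact ⟨⟨_, rfl⟩, hf _⟩

theorem exists_mem_image_edge_iff (hf : ∀ j, s (f j) = j) (a b : N) :
    (∃ e ∈ univ.image f, s e = a ∧ t e = b) ↔ a ≠ r ∧ parentMap t r f a = b := by
  constructor
  · rintro ⟨e, he, rfl, rfl⟩
    obtain ⟨j, -, rfl⟩ := mem_image.1 he
    rw [hf j]
    exact ⟨j.2, parentMap_coe f j⟩
  · rintro ⟨ha, rfl⟩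
    exact ⟨f ⟨a, ha⟩, mem_image_of_mem _ (mem_univ _), hf _, (parentMap_coe f ⟨a, ha⟩).symm⟩

theorem isRootedSpanningTree_image_iff (hf : ∀ j, s (f j) = j) :
    IsRootedSpanningTree s t r (univ.image f) ↔ ∀ v, ∃ k, (parentMap t r f)^[k] v = r := by
  have hsource : (∀ v, v ≠ r → ((univ.image f).filter (fun e => s e = v)).card = 1) ∧
      ((univ.image f).filter (fun e => s e = r)).card = 0 :=
    ⟨fun v hv => by rw [filter_source_image_eq hf, dif_neg hv, card_singleton],
      by rw [filter_source_image_eq hf, dif_pos rfl, Finset.card_empty]⟩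
  have hedge : (fun a b => ∃ e ∈ univ.image f, s e = a ∧ t e = b) =
      fun a b => a ≠ r ∧ parentMap t r f a = b := by
    ext a b
    exact exists_mem_image_edge_iff hf a b
  rw [IsRootedSpanningTree, hedge, and_iff_right hsource.2, and_iff_right hsource.1]
  exact forall_congr' fun v =>
    reflTransGen_iff_exists_iterate (fun _ _ h => h.2) fun x hx => ⟨hx, rfl⟩

theorem exists_image_eq_of_card_filter_source {τ : Finset E}
    (hone : ∀ v, v ≠ r → (τ.filter (fun e => s e = v)).card = 1)
    (hzero : (τ.filter (fun e => s e = r)).card = 0) :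
    ∃ f : {v // v ≠ r} → E, (∀ j, s (f j) = j) ∧ univ.image f = τ := by
  choose f hf using fun j : {v // v ≠ r} => card_eq_one.1 (hone j j.2)
  have hmem : ∀ j, f j ∈ τ ∧ s (f j) = j := fun j => mem_filter.1 (hf j ▸ mem_singleton_self _)
  refine ⟨f, fun j => (hmem j).2, ext fun e => ⟨fun he => ?_, fun he => ?_⟩⟩
  · obtain ⟨j, -, rfl⟩ := mem_image.1 he
    exact (hmem j).1
  · have hr : s e ≠ r := fun h => by
      have : e ∈ τ.filter (fun e => s e = r) := mem_filter.2 ⟨he, h⟩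
      simp [card_eq_zero.1 hzero] at this
    have : e ∈ τ.filter (fun e' => s e' = s e) := mem_filter.2 ⟨he, rfl⟩
    rw [hf ⟨s e, hr⟩, mem_singleton] at this
    exact this ▸ mem_image_of_mem _ (mem_univ _)

theorem eq_of_image_eq {g : {v // v ≠ r} → E} (hf : ∀ j, s (f j) = j) (hg : ∀ j, s (g j) = j)
    (h : univ.image f = univ.image g) : f = g := by
  funext j
  obtain ⟨i, -, hi⟩ := mem_image.1 (h ▸ mem_image_of_mem f (mem_univ j))
  have : i = j := Subtype.ext (by rw [← hg i, hi, hf j])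
  rw [← hi, this]

theorem sum_prod_isRootedSpanningTree [Fintype E] {R : Type*} [CommSemiring R] (π : E → R) :
    ∑ τ ∈ univ.filter (IsRootedSpanningTree s t r), ∏ e ∈ τ, π e =
      ∑ f ∈ (outEdgeChoices s r).filter (fun f => ∀ v, ∃ k, (parentMap t r f)^[k] v = r),
        ∏ j, π (f j) := by
  have hinj : ∀ f : {v // v ≠ r} → E, (∀ j, s (f j) = j) → Injective f := fun f hf =>
    Injective.of_comp (f := s) (by simpa only [comp_def, hf] using Subtype.val_injective)
  have himage : univ.filter (IsRootedSpanningTree s t r) =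
      ((outEdgeChoices s r).filter (fun f => ∀ v, ∃ k, (parentMap t r f)^[k] v = r)).image
        (fun f => univ.image f) := by
    ext τ
    simp only [mem_filter, mem_univ, true_and, mem_image, mem_outEdgeChoices]
    constructor
    · intro hτ
      obtain ⟨f, hf, rfl⟩ := exists_image_eq_of_card_filter_source hτ.1 hτ.2.1
      exact ⟨f, ⟨hf, (isRootedSpanningTree_image_iff hf).1 hτ⟩, rfl⟩
    · rintro ⟨f, ⟨hf, hreach⟩, rfl⟩
      exact (isRootedSpanningTree_image_iff hf).2 hreach
  rw [himage, sum_image]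
  · refine sum_congr rfl fun f hf => prod_image fun a _ b _ h => ?_
    exact hinj f (mem_outEdgeChoices.1 (mem_filter.1 hf).1) h
  · intro f hf g hg
    exact eq_of_image_eq (mem_outEdgeChoices.1 (mem_filter.1 hf).1)
      (mem_outEdgeChoices.1 (mem_filter.1 hg).1)

end RootedSpanningTree

theorem stmt_10_general {N E : Type*} [Fintype N] [DecidableEq N] [Fintype E]
    (s t : E → N) (hloop : ∀ e, s e ≠ t e) (π : E → ℝ)
    (L : Matrix N N ℝ)
    (hoff : ∀ i j : N, i ≠ j →
      L i j = ∑ e ∈ Finset.univ.filter (fun e => s e = j ∧ t e = i), π e)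
    (hdiag : ∀ j : N, L j j = -∑ i ∈ Finset.univ.erase j, L i j)
    (N₀ : N)
    -- a spanning tree rooted at N₀: every node other than N₀ has exactly one
    -- outgoing edge, N₀ has none, and every node reaches N₀
    (IsSpanningTree : Finset E → Prop)
    (hTree : ∀ τ : Finset E, IsSpanningTree τ ↔
      ((∀ v : N, v ≠ N₀ → (τ.filter (fun e => s e = v)).card = 1) ∧
       (τ.filter (fun e => s e = N₀)).card = 0 ∧
       (∀ v : N, Relation.ReflTransGen
          (fun a b => ∃ e ∈ τ, s e = a ∧ t e = b) v N₀))) :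
    Matrix.det (L.submatrix (fun i : {v : N // v ≠ N₀} => (i : N))
        (fun j : {v : N // v ≠ N₀} => (j : N))) =
      (-1 : ℝ) ^ (Fintype.card N - 1) *
        ∑ τ ∈ Finset.univ.filter IsSpanningTree, ∏ e ∈ τ, π e := by
  let row : {v // v ≠ N₀} → E → {v // v ≠ N₀} → ℝ := fun j e i =>
    (if j = i then 1 else 0) - if t e = i then 1 else 0
  have hrows : (L.submatrix (fun i : {v : N // v ≠ N₀} => (i : N))
      (fun j : {v : N // v ≠ N₀} => (j : N)))ᵀ =
      -of fun j : {v // v ≠ N₀} => ∑ e ∈ univ.filter (fun e => s e = j), π e • row j e := by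
    ext j i
    simp [laplacian_apply_eq_neg_sum hloop hoff hdiag i j, row, Subtype.ext_iff]
  have hchoice : ∀ f : {v // v ≠ N₀} → E,
      of (fun j => row j (f j)) = 1 - succMatrix ℝ N₀ (parentMap t N₀ f) := by
    intro f
    ext j i
    simp [row, succMatrix, one_apply, parentMap_coe]
  have htrees : univ.filter IsSpanningTree = univ.filter (IsRootedSpanningTree s t N₀) :=
    filter_congr fun τ _ => hTree τ
  have hcard : Fintype.card {v : N // v ≠ N₀} = Fintype.card N - 1 := by
    simp [Fintype.card_subtype_compl]
  rw [← det_transpose, hrows, det_neg, det_of_sum_smul_rows, hcard, htrees,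
    sum_prod_isRootedSpanningTree, sum_filter]
  congr 1
  refine sum_congr rfl fun f _ => ?_
  rw [hchoice, det_one_sub_succMatrix, mul_ite, mul_one, mul_zero]

/-- The (weighted, directed, multigraph) matrix-tree theorem: the principal
minor of the Laplacian obtained by deleting the row and column of a node N₀
equals (-1)^(|N|-1) times the sum over all spanning trees rooted at N₀ of the
products of the edge labels. -/
theorem stmt_10 {N E : Type*} [Fintype N] [DecidableEq N] [Fintype E] [DecidableEq E]
    (s t : E → N) (hloop : ∀ e, s e ≠ t e) (π : E → ℝ)
    (L : Matrix N N ℝ)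
    (hoff : ∀ i j : N, i ≠ j →
      L i j = ∑ e ∈ Finset.univ.filter (fun e => s e = j ∧ t e = i), π e)
    (hdiag : ∀ j : N, L j j = -∑ i ∈ Finset.univ.erase j, L i j)
    (N₀ : N)
    -- a spanning tree rooted at N₀: every node other than N₀ has exactly one
    -- outgoing edge, N₀ has none, and every node reaches N₀
    (IsSpanningTree : Finset E → Prop)
    (hTree : ∀ τ : Finset E, IsSpanningTree τ ↔
      ((∀ v : N, v ≠ N₀ → (τ.filter (fun e => s e = v)).card = 1) ∧
       (τ.filter (fun e => s e = N₀)).card = 0 ∧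
       (∀ v : N, Relation.ReflTransGen
          (fun a b => ∃ e ∈ τ, s e = a ∧ t e = b) v N₀))) :
    Matrix.det (L.submatrix (fun i : {v : N // v ≠ N₀} => (i : N))
        (fun j : {v : N // v ≠ N₀} => (j : N))) =
      (-1 : ℝ) ^ (Fintype.card N - 1) *
        ∑ τ ∈ Finset.univ.filter IsSpanningTree, ∏ e ∈ τ, π e :=
  stmt_10_general s t hloop π L hoff hdiag N₀ IsSpanningTree hTree
end

section
/- Let U be a reactant-noninteracting set of species, and let W = { ω ∈ S^⊥ : supp(ω) ⊆ U }. Define U_0 = { i ∈ U : ω_i = 0 for all ω ∈ W }. Suppose W admits a basis of nonnegative vectors. If a reaction r satisfies Σ_{i ∈ U}(y_r)_i = 1 and the unique species of U in its reactant lies in U_0, then r involves no species of U \ U_0 at all: (y_r)_i = (y'_r)_i = 0 for every i ∈ U \ U_0. -/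
/-- If W = { ω ∈ S^⊥ : supp ω ⊆ U } admits a nonnegative basis and the single
U-species in the reactant of a reaction r lies in U₀, then r involves no
species of U \ U₀. -/
theorem stmt_15 {n : ℕ} {R : Type*} [Fintype R]
    (y y' : R → Fin n → ℕ)
    (U : Finset (Fin n))
    (hU : ∀ r, ∑ i ∈ U, y r i ≤ 1)
    -- membership in W = S_U^⊥
    (P : (Fin n → ℝ) → Prop)
    (hP : ∀ ω, P ω ↔
      ((∀ r, ∑ i, ω i * ((y' r i : ℝ) - (y r i : ℝ)) = 0) ∧
       (∀ i, i ∉ U → ω i = 0)))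
    -- W admits a nonnegative basis
    (hbasis : ∃ d : ℕ, ∃ ω : Fin d → Fin n → ℝ,
      (∀ k i, 0 ≤ ω k i) ∧ (∀ k, P (ω k)) ∧ LinearIndependent ℝ ω ∧
      (∀ z, P z → ∃ c : Fin d → ℝ, z = ∑ k, c k • ω k)) :
    ∀ r, (∑ i ∈ U, y r i = 1) →
      (∀ i ∈ U, y r i ≠ 0 → ∀ ω, P ω → ω i = 0) →
      ∀ i ∈ U, ¬ (∀ ω, P ω → ω i = 0) →
        y r i = 0 ∧ y' r i = 0 := by
  intro r hsum hU0 i hiU hi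
  push_neg at hi
  obtain ⟨z, hz, hzi⟩ := hi
  have hyri : y r i = 0 := by
    by_contra h
    exact hzi (hU0 i hiU h z hz)
  refine ⟨hyri, ?_⟩
  obtain ⟨d, ω, hpos, hPω, hli, hspan⟩ := hbasis
  obtain ⟨c, hc⟩ := hspan z hz
  have hex : ∃ k, ω k i ≠ 0 := by
    by_contra h
    push_neg at h
    apply hzi
    have h2 := congrFun hc i
    simpa [Finset.sum_apply, h] using h2
  obtain ⟨k, hk⟩ := hex
  set w := ω k with hw
  have hwU : ∀ j, j ∉ U → w j = 0 := ((hP w).1 (hPω k)).2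
  have horth := ((hP w).1 (hPω k)).1 r
  have hry : ∀ j, w j * (y r j : ℝ) = 0 := by
    intro j
    by_cases hj : j ∈ U
    · by_cases hy : y r j = 0
      · simp [hy]
      · simp [hU0 j hj hy w (hPω k)]
    · simp [hwU j hj]
  have hsum' : ∑ j, w j * (y' r j : ℝ) = 0 := by
    have heq : ∑ j, w j * ((y' r j : ℝ) - y r j)
        = ∑ j, (w j * (y' r j : ℝ) - w j * y r j) := by
      apply Finset.sum_congr rfl
      intro j _
      ring
    rw [heq, Finset.sum_sub_distrib] at horth
    have hz0 : ∑ j, w j * (y r j : ℝ) = 0 := Finset.sum_eq_zero fun j _ => hry j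
    rw [hz0, sub_zero] at horth
    exact horth
  have hterm : w i * (y' r i : ℝ) = 0 := by
    have h0 : ∀ j ∈ Finset.univ, 0 ≤ w j * (y' r j : ℝ) := fun j _ =>
      mul_nonneg (hpos k j) (Nat.cast_nonneg _)
    exact (Finset.sum_eq_zero_iff_of_nonneg h0).1 hsum' i (Finset.mem_univ i)
  rcases mul_eq_zero.1 hterm with h | h
  · exact absurd h hk
  · exact_mod_cast h
end
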